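/- arXiv:2006.15847 — 3 statements merged into one kernel-verified Lean document; each statement's English description precedes it below -/
import Mathlib

section
/- Let Γ be a right-angled Coxeter group with generators S and commuting pairs R, let V be a finite-dimensional real vector space, and ρ: Γ → GL(V) a representation. Then the space of cocycles Z¹_ρ(Γ,V) = {τ: Γ → V | τ(γη) = ρ(γ)τ(η) + τ(γ)} is isomorphic (by restriction to generators) to the vector space of functions τ: S → V such that (id + ρ(s))·τ(s) = 0 for all s ∈ S, and (id − ρ(s₁))·τ(s₂) = (id − ρ(s₂))·τ(s₁) for all (s₁,s₂) ∈ R. -/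
/-!
A cocycle `τ` for `ρ` is the same thing as a homomorphism `γ ↦ (x ↦ τ γ + ρ γ x)` into the
affine group of `V` with linear part `ρ`. On the generators of a right-angled Coxeter group the
two conditions on `t` say precisely that the affine maps `x ↦ t s + ρ s x` satisfy the defining
relations (they are involutions, and they commute for `(s₁, s₂) ∈ R`), so they define such a
homomorphism; its translation part is the required cocycle, unique because the generators
generate.
-/

/-- The defining relators of the right-angled Coxeter group on the set `S` with set of
commuting pairs `R`. -/
def racgRels (S : Type*) (R : Set (S × S)) : Set (FreeGroup S) :=
  {w | (∃ a : S, w = FreeGroup.of a * FreeGroup.of a) ∨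
       ∃ p ∈ R, w = FreeGroup.of p.1 * FreeGroup.of p.2 *
         (FreeGroup.of p.1)⁻¹ * (FreeGroup.of p.2)⁻¹}

section Cocycle

variable {G k V : Type*} [Group G] [Ring k] [AddCommGroup V] [Module k V]

def IsCocycle (ρ : G →* (V ≃ₗ[k] V)) (τ : G → V) : Prop :=
  ∀ g h, τ (g * h) = ρ g (τ h) + τ g

namespace IsCocycle

variable {ρ : G →* (V ≃ₗ[k] V)} {τ σ : G → V}

theorem map_one (hτ : IsCocycle ρ τ) : τ 1 = 0 := by
  simpa using hτ 1 1

theorem map_inv (hτ : IsCocycle ρ τ) (g : G) : τ g⁻¹ = -ρ g⁻¹ (τ g) := by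
  have h := hτ g⁻¹ g
  rw [inv_mul_cancel, hτ.map_one] at h
  exact eq_neg_of_add_eq_zero_right h.symm

theorem add_apply_self_eq_zero (hτ : IsCocycle ρ τ) {g : G} (hg : g * g = 1) :
    τ g + ρ g (τ g) = 0 := by
  have h := hτ g g
  rw [hg, hτ.map_one, add_comm] at h
  exact h.symm

theorem sub_eq_sub_of_commute (hτ : IsCocycle ρ τ) {g h : G} (hgh : Commute g h) :
    τ h - ρ g (τ h) = τ g - ρ h (τ g) := by
  have hτgh := hτ g h
  rw [hgh.eq, hτ h g] at hτgh
  rw [sub_eq_sub_iff_add_eq_add, add_comm (τ h), add_comm (τ g)]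
  exact hτgh

theorem eq_of_eqOn_closure (hτ : IsCocycle ρ τ) (hσ : IsCocycle ρ σ) {s : Set G}
    (hs : Subgroup.closure s = ⊤) (hτσ : Set.EqOn τ σ s) : τ = σ := by
  funext g
  have hg : g ∈ Subgroup.closure s := hs ▸ Subgroup.mem_top g
  induction hg using Subgroup.closure_induction with
  | mem x hx => exact hτσ hx
  | one => rw [hτ.map_one, hσ.map_one]
  | mul x y _ _ hx hy => rw [hτ x y, hσ x y, hx, hy]
  | inv x _ hx => rw [hτ.map_inv, hσ.map_inv, hx]

end IsCocycle

theorem isCocycle_apply_zero {ρ : G →* (V ≃ₗ[k] V)} {F : G →* (V ≃ᵃ[k] V)}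
    (hF : AffineEquiv.linearHom.comp F = ρ) : IsCocycle ρ (fun g => F g 0) := by
  intro g h
  have hlin : (F g).linear = ρ g := by rw [← hF]; rfl
  show F (g * h) 0 = ρ g (F h 0) + F g 0
  rw [map_mul, AffineEquiv.coe_mul, Function.comp_apply, ← hlin]
  exact congrFun (F g).toAffineMap.decomp (F h 0)

end Cocycle

section AffineEquiv

variable {k V : Type*} [Ring k] [AddCommGroup V] [Module k V]

def affineEquivOfLinear (A : V ≃ₗ[k] V) (v : V) : V ≃ᵃ[k] V :=
  A.toAffineEquiv.trans (AffineEquiv.constVAdd k V v)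

@[simp]
theorem affineEquivOfLinear_apply (A : V ≃ₗ[k] V) (v x : V) :
    affineEquivOfLinear A v x = v + A x :=
  rfl

@[simp]
theorem linear_affineEquivOfLinear (A : V ≃ₗ[k] V) (v : V) :
    (affineEquivOfLinear A v).linear = A :=
  rfl

theorem affineEquivOfLinear_mul_self {A : V ≃ₗ[k] V} {v : V} (hA : A * A = 1)
    (hv : v + A v = 0) : affineEquivOfLinear A v * affineEquivOfLinear A v = 1 := by
  ext x
  have hAx : A (A x) = x := LinearEquiv.congr_fun hA x
  simp only [AffineEquiv.coe_mul, Function.comp_apply, affineEquivOfLinear_apply, map_add, hAx,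
    AffineEquiv.coe_one, id_eq]
  rw [← add_assoc, hv, zero_add]

theorem commute_affineEquivOfLinear {A B : V ≃ₗ[k] V} {v w : V} (hAB : Commute A B)
    (h : w - A w = v - B v) : Commute (affineEquivOfLinear A v) (affineEquivOfLinear B w) := by
  ext x
  have hABx : A (B x) = B (A x) := LinearEquiv.congr_fun hAB.eq x
  simp only [AffineEquiv.coe_mul, Function.comp_apply, affineEquivOfLinear_apply, map_add, hABx]
  rw [← add_assoc, ← add_assoc, (sub_eq_sub_iff_add_eq_add.mp h).symm]

end AffineEquiv

section RightAngledCoxeter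

variable {S : Type*} {R : Set (S × S)}

theorem racg_of_mul_self (a : S) :
    (PresentedGroup.of a * PresentedGroup.of a : PresentedGroup (racgRels S R)) = 1 :=
  PresentedGroup.one_of_mem (Or.inl ⟨a, rfl⟩)

theorem racg_commute_of {p : S × S} (hp : p ∈ R) :
    Commute (PresentedGroup.of p.1 : PresentedGroup (racgRels S R)) (PresentedGroup.of p.2) := by
  rw [← commutatorElement_eq_one_iff_commute, commutatorElement_def]
  exact PresentedGroup.one_of_mem (Or.inr ⟨p, hp, rfl⟩)

theorem lift_racgRels_eq_one {H : Type*} [Group H] {f : S → H} (hsq : ∀ a, f a * f a = 1)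
    (hcomm : ∀ p ∈ R, Commute (f p.1) (f p.2)) : ∀ r ∈ racgRels S R, FreeGroup.lift f r = 1 := by
  rintro r (⟨a, rfl⟩ | ⟨p, hp, rfl⟩)
  · simpa using hsq a
  · simpa [← commutatorElement_def, commutatorElement_eq_one_iff_commute] using hcomm p hp

end RightAngledCoxeter

theorem stmt6_general {S : Type} (R : Set (S × S))
    {V : Type} [AddCommGroup V] [Module ℝ V]
    (ρ : PresentedGroup (racgRels S R) →* (V ≃ₗ[ℝ] V)) :
    (∀ τ : PresentedGroup (racgRels S R) → V,
      (∀ γ η, τ (γ * η) = ρ γ (τ η) + τ γ) →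
      ((∀ a : S, τ (PresentedGroup.of a) +
          ρ (PresentedGroup.of a) (τ (PresentedGroup.of a)) = 0) ∧
       ∀ p ∈ R,
         τ (PresentedGroup.of p.2) - ρ (PresentedGroup.of p.1) (τ (PresentedGroup.of p.2)) =
         τ (PresentedGroup.of p.1) - ρ (PresentedGroup.of p.2) (τ (PresentedGroup.of p.1)))) ∧
    (∀ t : S → V,
      ((∀ a : S, t a + ρ (PresentedGroup.of a) (t a) = 0) ∧
       ∀ p ∈ R,
         t p.2 - ρ (PresentedGroup.of p.1) (t p.2) =
         t p.1 - ρ (PresentedGroup.of p.2) (t p.1)) →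
      ∃! τ : PresentedGroup (racgRels S R) → V,
        (∀ γ η, τ (γ * η) = ρ γ (τ η) + τ γ) ∧
        ∀ a : S, τ (PresentedGroup.of a) = t a) := by
  refine ⟨fun τ (hτ : IsCocycle ρ τ) => ⟨fun a => hτ.add_apply_self_eq_zero (racg_of_mul_self a),
    fun p hp => hτ.sub_eq_sub_of_commute (racg_commute_of hp)⟩, ?_⟩
  rintro t ⟨ht_sq, ht_comm⟩
  let F := PresentedGroup.toGroup (lift_racgRels_eq_one
    (f := fun a => affineEquivOfLinear (ρ (PresentedGroup.of a)) (t a))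
    (fun a => affineEquivOfLinear_mul_self (by rw [← map_mul, racg_of_mul_self, map_one]) (ht_sq a))
    (fun p hp => commute_affineEquivOfLinear ((racg_commute_of hp).map ρ) (ht_comm p hp)))
  have hF_of (a : S) : F (PresentedGroup.of a) =
      affineEquivOfLinear (ρ (PresentedGroup.of a)) (t a) :=
    PresentedGroup.toGroup.of _
  have hF : AffineEquiv.linearHom.comp F = ρ :=
    PresentedGroup.ext fun a => by simp [hF_of]
  have hF_gen (a : S) : F (PresentedGroup.of a) 0 = t a := by simp [hF_of]
  refine ⟨fun γ => F γ 0, ⟨isCocycle_apply_zero hF, hF_gen⟩, ?_⟩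
  rintro σ ⟨hσ, hσ_gen⟩
  exact IsCocycle.eq_of_eqOn_closure hσ (isCocycle_apply_zero hF)
    (PresentedGroup.closure_range_of _) fun _ ⟨a, ha⟩ => ha ▸ (hσ_gen a).trans (hF_gen a).symm

/-- For a representation `ρ` of a right-angled Coxeter group `Γ` on a finite-dimensional real
vector space `V`, the space of cocycles `Z¹_ρ(Γ,V)` is isomorphic, by restriction to the
generators, to the space of functions `t : S → V` with `(id + ρ(s)) t(s) = 0` for all `s ∈ S`
and `(id − ρ(s₁)) t(s₂) = (id − ρ(s₂)) t(s₁)` for all `(s₁,s₂) ∈ R`: the restriction of every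
cocycle satisfies these conditions, and every such `t` extends uniquely to a cocycle. -/
theorem stmt6 {S : Type} (R : Set (S × S)) (hR : ∀ p ∈ R, p.1 ≠ p.2)
    {V : Type} [AddCommGroup V] [Module ℝ V] [FiniteDimensional ℝ V]
    (ρ : PresentedGroup (racgRels S R) →* (V ≃ₗ[ℝ] V)) :
    (∀ τ : PresentedGroup (racgRels S R) → V,
      (∀ γ η, τ (γ * η) = ρ γ (τ η) + τ γ) →
      ((∀ a : S, τ (PresentedGroup.of a) +
          ρ (PresentedGroup.of a) (τ (PresentedGroup.of a)) = 0) ∧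
       ∀ p ∈ R,
         τ (PresentedGroup.of p.2) - ρ (PresentedGroup.of p.1) (τ (PresentedGroup.of p.2)) =
         τ (PresentedGroup.of p.1) - ρ (PresentedGroup.of p.2) (τ (PresentedGroup.of p.1)))) ∧
    (∀ t : S → V,
      ((∀ a : S, t a + ρ (PresentedGroup.of a) (t a) = 0) ∧
       ∀ p ∈ R,
         t p.2 - ρ (PresentedGroup.of p.1) (t p.2) =
         t p.1 - ρ (PresentedGroup.of p.2) (t p.1)) →
      ∃! τ : PresentedGroup (racgRels S R) → V,
        (∀ γ η, τ (γ * η) = ρ γ (τ η) + τ γ) ∧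
        ∀ a : S, τ (PresentedGroup.of a) = t a) :=
  stmt6_general R ρ
end

section
/- Let p, q ∈ ℝ^{1,n-1} be two points of Minkowski space. The sets S_p, S_q of spacelike affine hyperplanes through p and through q respectively satisfy: S_p ∩ S_q ≠ ∅ if and only if p − q is spacelike (⟨p−q, p−q⟩ > 0) or p = q. -/
open scoped BigOperators

/-- The Minkowski bilinear form of signature `(1,n-1)` on `ℝ^{1,n-1} = ℝⁿ`. -/
noncomputable def mink (n : ℕ) (x y : Fin n → ℝ) : ℝ :=
  ∑ i : Fin n, (if (i : ℕ) = 0 then (-1 : ℝ) else 1) * x i * y i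

/-- A spacelike affine hyperplane of Minkowski space: an affine hyperplane whose normal
vector `T` is timelike. -/
def SpacelikeHyp (n : ℕ) (H : Set (Fin n → ℝ)) : Prop :=
  ∃ T x₀ : Fin n → ℝ, mink n T T < 0 ∧ H = {x | mink n (x - x₀) T = 0}

/-! Two points lie on a common spacelike hyperplane iff `p - q` is orthogonal to some timelike
`T = (a, t)`. That orthogonal complement is positive definite: for `v = (b, w)` with `⟪w, t⟫ = b a`,
Cauchy–Schwarz and `‖t‖² < a²` give `a² b² ≤ ‖w‖² ‖t‖² < a² ‖w‖²` unless `w = 0`. Conversely, a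
spacelike `v = (b, w)` is orthogonal to the timelike vector `(‖w‖², b w)`. -/

lemma mink_sub_left (n : ℕ) (x y T : Fin n → ℝ) :
    mink n (x - y) T = mink n x T - mink n y T := by
  simp only [mink, Pi.sub_apply, mul_sub, sub_mul, Finset.sum_sub_distrib]

lemma mink_zero_left (n : ℕ) (T : Fin n → ℝ) : mink n 0 T = 0 := by
  simp [mink]

lemma mink_succ (m : ℕ) (x y : Fin (m + 1) → ℝ) :
    mink (m + 1) x y = -(x 0 * y 0) + ∑ i : Fin m, x i.succ * y i.succ := by
  simp [mink, Fin.sum_univ_succ]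

lemma sq_lt_sum_sq_or_eq_zero {ι : Type*} [Fintype ι] {a b : ℝ} {t w : ι → ℝ}
    (ht : ∑ i, t i ^ 2 < a ^ 2) (hwt : ∑ i, w i * t i = b * a) :
    b ^ 2 < ∑ i, w i ^ 2 ∨ (b = 0 ∧ w = 0) := by
  have hCS : (b * a) ^ 2 ≤ (∑ i, w i ^ 2) * ∑ i, t i ^ 2 :=
    hwt ▸ Finset.sum_mul_sq_le_sq_mul_sq _ w t
  have ht₀ : 0 ≤ ∑ i, t i ^ 2 := by positivity
  rcases (show 0 ≤ ∑ i, w i ^ 2 by positivity).lt_or_eq with hw | hw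
  · left
    nlinarith
  · right
    have ha : a ≠ 0 := by rintro rfl; linarith
    have hba : b * a = 0 :=
      pow_eq_zero_iff two_ne_zero |>.mp (le_antisymm (by rwa [← hw, zero_mul] at hCS) (sq_nonneg _))
    refine ⟨(mul_eq_zero.mp hba).resolve_right ha, funext fun i => ?_⟩
    have := (Fintype.sum_eq_zero_iff_of_nonneg fun i => sq_nonneg (w i)).mp hw.symm
    exact pow_eq_zero_iff two_ne_zero |>.mp (congrFun this i)

lemma pos_or_eq_zero_of_mink_eq_zero {m : ℕ} {T v : Fin (m + 1) → ℝ}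
    (hT : mink (m + 1) T T < 0) (hvT : mink (m + 1) v T = 0) :
    0 < mink (m + 1) v v ∨ v = 0 := by
  rw [mink_succ] at hT hvT ⊢
  rcases sq_lt_sum_sq_or_eq_zero (a := T 0) (b := v 0) (t := Fin.tail T) (w := Fin.tail v)
    (by simp only [Fin.tail, sq]; linarith) (by simp only [Fin.tail]; linarith) with h | ⟨h₀, h⟩
  · left
    simp only [Fin.tail, sq] at h
    linarith
  · right
    rw [← Fin.cons_self_tail v, h₀, h]
    exact Matrix.cons_zero_zero

lemma exists_timelike_mink_eq_zero_of_pos {m : ℕ} {v : Fin (m + 1) → ℝ}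
    (hv : 0 < mink (m + 1) v v) :
    ∃ T, mink (m + 1) T T < 0 ∧ mink (m + 1) v T = 0 := by
  set B := ∑ i : Fin m, v i.succ * v i.succ
  have hB : 0 ≤ B := Finset.sum_nonneg fun i _ => mul_self_nonneg _
  rw [mink_succ] at hv
  refine ⟨Fin.cons B fun i => v 0 * v i.succ, ?_, ?_⟩
  · have hsum : ∑ i : Fin m, v 0 * v i.succ * (v 0 * v i.succ) = v 0 * v 0 * B := by
      rw [Finset.mul_sum]
      exact Finset.sum_congr rfl fun i _ => by ring
    simp only [mink_succ, Fin.cons_zero, Fin.cons_succ, hsum]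
    nlinarith
  · have hsum : ∑ i : Fin m, v i.succ * (v 0 * v i.succ) = v 0 * B := by
      simp only [mul_left_comm _ (v 0), ← Finset.mul_sum, B]
    simp only [mink_succ, Fin.cons_zero, Fin.cons_succ, hsum]
    ring

lemma exists_timelike_mink_eq_zero_iff (m : ℕ) (v : Fin (m + 1) → ℝ) :
    (∃ T, mink (m + 1) T T < 0 ∧ mink (m + 1) v T = 0) ↔ 0 < mink (m + 1) v v ∨ v = 0 := by
  refine ⟨fun ⟨T, hT, hvT⟩ => pos_or_eq_zero_of_mink_eq_zero hT hvT, ?_⟩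
  rintro (hv | rfl)
  · exact exists_timelike_mink_eq_zero_of_pos hv
  · exact ⟨Fin.cons 1 0, by simp [mink_succ], mink_zero_left _ _⟩

lemma exists_spacelikeHyp_mem_iff (n : ℕ) (p q : Fin n → ℝ) :
    (∃ H : Set (Fin n → ℝ), SpacelikeHyp n H ∧ p ∈ H ∧ q ∈ H) ↔
      ∃ T, mink n T T < 0 ∧ mink n (p - q) T = 0 := by
  constructor
  · rintro ⟨H, ⟨T, x₀, hT, rfl⟩, hp, hq⟩
    refine ⟨T, hT, ?_⟩
    rw [← sub_sub_sub_cancel_right p q x₀, mink_sub_left, Set.mem_ofPred.mp hp,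
      Set.mem_ofPred.mp hq, sub_zero]
  · rintro ⟨T, hT, hpq⟩
    refine ⟨{x | mink n (x - q) T = 0}, ⟨T, q, hT, rfl⟩, hpq, ?_⟩
    rw [Set.mem_ofPred, sub_self, mink_zero_left]

/-- Two points `p`, `q` of Minkowski space lie on a common spacelike affine hyperplane iff
`p − q` is spacelike or `p = q`. -/
theorem stmt10 (n : ℕ) (hn : 1 ≤ n) (p q : Fin n → ℝ) :
    (∃ H : Set (Fin n → ℝ), SpacelikeHyp n H ∧ p ∈ H ∧ q ∈ H) ↔
      (0 < mink n (p - q) (p - q) ∨ p = q) := by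
  obtain ⟨m, rfl⟩ := Nat.exists_eq_add_of_le' hn
  rw [exists_spacelikeHyp_mem_iff, exists_timelike_mink_eq_zero_iff, sub_eq_zero]
end

section
/- Let ρ: Γ → O(b) be a representation into the orthogonal group of a nondegenerate symmetric bilinear form b on ℝ^m. Suppose s, t ∈ Γ commute, ρ(s) = −id, and ρ(t) = r_v is the reflection in v^⊥ with b(v,v) = 1. Then for any cocycle τ ∈ Z¹_ρ(Γ, ℝ^m) one has b(τ(s) − τ(t), v) = 0, i.e. τ(s) − τ(t) ∈ v^⊥. -/
theorem cocycle_commute {G R M : Type*} [Monoid G] [Semiring R] [AddCommMonoid M] [Module R M]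
    {ρ : G →* (M ≃ₗ[R] M)} {τ : G → M} (hτ : ∀ γ η, τ (γ * η) = ρ γ (τ η) + τ γ)
    {s t : G} (hst : s * t = t * s) :
    ρ s (τ t) + τ s = ρ t (τ s) + τ t := by
  rw [← hτ, ← hτ, hst]

theorem bilin_sub_eq_zero_of_neg_add_eq_reflection_add {K M : Type*} [Field K] [CharZero K]
    [AddCommGroup M] [Module K M] (B : M →ₗ[K] M →ₗ[K] K) {v a b : M} (hv : B v v = 1)
    (h : -a + b = (b - (2 * B b v) • v) + a) :
    B (b - a) v = 0 := by
  have hpair := congrArg (fun w => B w v) h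
  simp only [map_add, map_neg, map_sub, map_smul, LinearMap.add_apply, LinearMap.neg_apply,
    LinearMap.sub_apply, LinearMap.smul_apply, hv, smul_eq_mul, mul_one] at hpair
  have htwice : 2 * (B b v - B a v) = 0 := by linear_combination hpair
  rw [map_sub, LinearMap.sub_apply]
  exact (mul_eq_zero.mp htwice).resolve_left two_ne_zero

theorem stmt16_general (m : ℕ) {Γ : Type} [Group Γ]
    (B : (Fin m → ℝ) →ₗ[ℝ] (Fin m → ℝ) →ₗ[ℝ] ℝ)
    (ρ : Γ →* ((Fin m → ℝ) ≃ₗ[ℝ] (Fin m → ℝ)))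
    (s t : Γ) (hcomm : s * t = t * s)
    (v : Fin m → ℝ) (hv : B v v = 1)
    (hρs : ∀ w, ρ s w = -w)
    (hρt : ∀ w, ρ t w = w - (2 * B w v) • v)
    (τ : Γ → Fin m → ℝ)
    (hτ : ∀ γ η, τ (γ * η) = ρ γ (τ η) + τ γ) :
    B (τ s - τ t) v = 0 := by
  have hst := cocycle_commute hτ hcomm
  rw [hρs, hρt] at hst
  exact bilin_sub_eq_zero_of_neg_add_eq_reflection_add B hv hst

/-- Let `ρ : Γ → O(b)` be a representation into the orthogonal group of a nondegenerate
symmetric bilinear form `b` on `ℝ^m`.  Suppose `s, t ∈ Γ` commute, `t² = 1`,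
`ρ(s) = −id`, and `ρ(t) = r_v` is the reflection in `v^⊥` for a unit vector `v`.  Then
every cocycle `τ ∈ Z¹_ρ(Γ, ℝ^m)` satisfies `b(τ(s) − τ(t), v) = 0`, i.e.
`τ(s) − τ(t) ∈ v^⊥`. -/
theorem stmt16 (m : ℕ) {Γ : Type} [Group Γ]
    (B : (Fin m → ℝ) →ₗ[ℝ] (Fin m → ℝ) →ₗ[ℝ] ℝ)
    (hsymm : ∀ x y, B x y = B y x)
    (hnd : ∀ x, (∀ y, B x y = 0) → x = 0)
    (ρ : Γ →* ((Fin m → ℝ) ≃ₗ[ℝ] (Fin m → ℝ)))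
    (hρ : ∀ γ x y, B (ρ γ x) (ρ γ y) = B x y)
    (s t : Γ) (hcomm : s * t = t * s) (ht : t * t = 1)
    (v : Fin m → ℝ) (hv : B v v = 1)
    (hρs : ∀ w, ρ s w = -w)
    (hρt : ∀ w, ρ t w = w - (2 * B w v) • v)
    (τ : Γ → Fin m → ℝ)
    (hτ : ∀ γ η, τ (γ * η) = ρ γ (τ η) + τ γ) :
    B (τ s - τ t) v = 0 :=
  stmt16_general m B ρ s t hcomm v hv hρs hρt τ hτ
end
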